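/- Let G be a connected r-regular graph (r ≥ 2) with vertex set {v_1,…,v_n}, and for each i = 1,…,n let H_i be an r_1-regular graph on t ≥ 1 vertices (all H_i have the same number of vertices t and the same degree r_1, but may be different graphs). Let μ be an eigenvalue of 𝓛(G). Then every real root x of the cubic equation 2(r + t + r·r_1 + r_1·t)x³ − 2(2r·r_1 + 2r_1·t + 3r + 3t)x² + (2t·r_1 + 4r + 4t + r·r_1·μ + r·μ)x − r·μ = 0 is an eigenvalue of the normalized Laplacian of the generalized subdivision-vertex corona S(G)⊙∧_{i=1}^n H_i. -/

import Mathlib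

open Matrix Polynomial

/-- Adjacency matrix over `ℝ` (with classical decidability). -/
noncomputable def adjM {V : Type*} [Fintype V] [DecidableEq V] (G : SimpleGraph V) :
    Matrix V V ℝ :=
  letI : DecidableRel G.Adj := Classical.decRel _
  G.adjMatrix ℝ

/-- Degree of a vertex (with classical decidability). -/
noncomputable def cdeg {V : Type*} [Fintype V] (G : SimpleGraph V) (v : V) : ℕ :=
  letI : DecidableRel G.Adj := Classical.decRel _
  G.degree v

/-- The normalized Laplacian `𝓛(G) = I - D^{-1/2} A D^{-1/2}` of a finite graph. -/
noncomputable def normLap {V : Type*} [Fintype V] [DecidableEq V] (G : SimpleGraph V) :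
    Matrix V V ℝ :=
  1 - Matrix.diagonal (fun v => (Real.sqrt (cdeg G v))⁻¹) * adjM G
      * Matrix.diagonal (fun v => (Real.sqrt (cdeg G v))⁻¹)

/-- `x` is an eigenvalue of the real matrix `M`. -/
def IsEigenvalue {V : Type*} [Fintype V] (M : Matrix V V ℝ) (x : ℝ) : Prop :=
  ∃ v : V → ℝ, v ≠ 0 ∧ M.mulVec v = x • v

/-- The generalized subdivision-vertex corona `S(G) ⊙ ∧ᵢ Hᵢ`: take the subdivision `S(G)`
(vertices of `G` together with one inserted vertex per edge, each edge `uv` replaced by the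
path `u–e–v`), add a disjoint copy of each `Hᵢ`, and join the `i`-th vertex of `G` to every
vertex of `Hᵢ`. -/
def svc {n : ℕ} (G : SimpleGraph (Fin n)) (t : Fin n → ℕ)
    (H : ∀ i : Fin n, SimpleGraph (Fin (t i))) :
    SimpleGraph (Fin n ⊕ (G.edgeSet ⊕ Σ i : Fin n, Fin (t i))) :=
  SimpleGraph.fromRel (fun a b =>
    match a, b with
    | Sum.inl v, Sum.inr (Sum.inl e) => v ∈ (e : Sym2 (Fin n))
    | Sum.inl v, Sum.inr (Sum.inr ⟨i, _⟩) => v = i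
    | Sum.inr (Sum.inr ⟨i, w⟩), Sum.inr (Sum.inr ⟨j, w'⟩) =>
        ∃ h : i = j, (H j).Adj (h ▸ w) w'
    | _, _ => False)

/-!
Write `𝓛 = D^{-1/2} (D - A) D^{-1/2}`: then `x` is an eigenvalue of `𝓛` exactly when
`A g = (1 - x) D g` has a nonzero solution `g`. Let `φ` be an eigenvector of `𝓛(G)`, i.e.
`A(G) φ = r (1 - μ) φ`, and let `N` be the vertex–edge incidence matrix of `G`. Try `g = a φ` on
the vertices of `G`, `g = b Nᵀφ` on the inserted vertices (so `g(uv) = b (φ u + φ v)`) and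
`g = c φ(i)` on the copy of `Hᵢ`. Since `N Nᵀ = D(G) + A(G)`, the eigenvalue equation reduces to
three linear equations in `a, b, c`, which have a solution with `c ≠ 0` when `x` is a root of the
cubic, except when `x = 1` and `μ = 2`. In that case `Nᵀφ = 0` (φ alternates in sign along
edges), so `rank N < n ≤ |E(G)|` as `r ≥ 2`, and a nonzero `h` with `N h = 0`, placed on the
inserted vertices, is an eigenvector for `1`.
-/

open Finset SimpleGraph

theorem Matrix.exists_mulVec_eq_zero_of_vecMul_eq_zero {K m k : Type*} [Field K] [Fintype m]
    [Fintype k] (M : Matrix m k K) (hcard : Fintype.card m ≤ Fintype.card k) {φ : m → K}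
    (hφ : φ ≠ 0) (hφM : φ ᵥ* M = 0) : ∃ h : k → K, h ≠ 0 ∧ M *ᵥ h = 0 := by
  have hker_transpose : LinearMap.ker Mᵀ.mulVecLin ≠ ⊥ :=
    (Submodule.ne_bot_iff _).2 ⟨φ, by simpa [mulVec_transpose] using hφM, hφ⟩
  have hrank : M.rank < Fintype.card m := by
    have := LinearMap.finrank_range_add_finrank_ker Mᵀ.mulVecLin
    have := Submodule.one_le_finrank_iff.2 hker_transpose
    rw [← rank_transpose]
    simp only [Module.finrank_fintype_fun_eq_card] at *
    unfold rank
    omega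
  have hker : LinearMap.ker M.mulVecLin ≠ ⊥ := by
    intro hbot
    have := LinearMap.finrank_range_add_finrank_ker M.mulVecLin
    rw [hbot, finrank_bot, Module.finrank_fintype_fun_eq_card] at this
    unfold rank at hrank
    omega
  obtain ⟨h, hh, h0⟩ := (Submodule.ne_bot_iff _).1 hker
  exact ⟨h, h0, hh⟩

namespace SimpleGraph

lemma card_le_card_edgeSet {V : Type*} [Fintype V] {G : SimpleGraph V} [DecidableRel G.Adj]
    {r : ℕ} (hreg : G.IsRegularOfDegree r) (hr : 2 ≤ r) :
    Fintype.card V ≤ Fintype.card G.edgeSet := by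
  have := G.sum_degrees_eq_twice_card_edges
  rw [sum_congr rfl fun v _ => hreg v, sum_const, card_univ, smul_eq_mul,
    edgeFinset_card] at this
  nlinarith

variable {V : Type*} [DecidableEq V] (G : SimpleGraph V) [DecidableRel G.Adj]

def edgeIncMatrix : Matrix V G.edgeSet ℝ := (G.incMatrix ℝ).submatrix id (↑)

lemma edgeIncMatrix_apply (v : V) (e : G.edgeSet) :
    G.edgeIncMatrix v e = if v ∈ (e : Sym2 V) then 1 else 0 := by
  simp [edgeIncMatrix, incMatrix_apply', incidenceSet, e.2]

variable [Fintype V]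

lemma sum_edgeSet_incMatrix_mul (v : V) (F : Sym2 V → ℝ) :
    ∑ e : G.edgeSet, G.incMatrix ℝ v e * F e = ∑ e, G.incMatrix ℝ v e * F e := by
  rw [← sum_subset (subset_univ G.edgeFinset), sum_subtype _ (fun _ => mem_edgeFinset)]
  intro e _ he
  rw [incMatrix_of_notMem_incidenceSet _ fun h => he (mem_edgeFinset.2 h.1), zero_mul]

lemma edgeIncMatrix_mulVec_const (a : ℝ) (v : V) :
    (G.edgeIncMatrix *ᵥ fun _ => a) v = G.degree v * a := by
  simp only [mulVec, dotProduct, edgeIncMatrix, submatrix_apply, id]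
  rw [G.sum_edgeSet_incMatrix_mul v fun _ => a, ← sum_mul, sum_incMatrix_apply]

lemma edgeIncMatrix_transpose_mulVec_const (a : ℝ) (e : G.edgeSet) :
    (G.edgeIncMatrixᵀ *ᵥ fun _ => a) e = 2 * a := by
  simp only [mulVec, dotProduct, edgeIncMatrix, transpose_apply, submatrix_apply, id]
  rw [← sum_mul, G.sum_incMatrix_apply_of_mem_edgeSet e.2]

lemma incMatrix_mul_transpose_eq_degMatrix_add_adjMatrix :
    G.incMatrix ℝ * (G.incMatrix ℝ)ᵀ = G.degMatrix ℝ + G.adjMatrix ℝ := by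
  rw [incMatrix_mul_transpose]
  ext a b
  by_cases hab : a = b
  · subst hab
    simp [degMatrix]
  · simp [degMatrix, hab]

lemma edgeIncMatrix_mul_transpose :
    G.edgeIncMatrix * G.edgeIncMatrixᵀ = G.degMatrix ℝ + G.adjMatrix ℝ := by
  rw [← incMatrix_mul_transpose_eq_degMatrix_add_adjMatrix]
  ext a b
  exact G.sum_edgeSet_incMatrix_mul a fun e => G.incMatrix ℝ b e

lemma edgeIncMatrix_transpose_mulVec_eq_zero {φ : V → ℝ}
    (hφ : (G.degMatrix ℝ + G.adjMatrix ℝ) *ᵥ φ = 0) : G.edgeIncMatrixᵀ *ᵥ φ = 0 := by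
  have hquad : φ ⬝ᵥ (G.edgeIncMatrix * G.edgeIncMatrixᵀ) *ᵥ φ = 0 := by
    rw [edgeIncMatrix_mul_transpose, hφ, dotProduct_zero]
  rwa [← mulVec_mulVec, dotProduct_mulVec, ← mulVec_transpose, dotProduct_self_eq_zero] at hquad

variable {G}

lemma exists_edgeIncMatrix_mulVec_eq_zero {r : ℕ} (hreg : G.IsRegularOfDegree r) (hr : 2 ≤ r)
    {φ : V → ℝ} (hφ0 : φ ≠ 0) (hφ : G.adjMatrix ℝ *ᵥ φ = (-r : ℝ) • φ) :
    ∃ h : G.edgeSet → ℝ, h ≠ 0 ∧ G.edgeIncMatrix *ᵥ h = 0 := by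
  have hsignless : (G.degMatrix ℝ + G.adjMatrix ℝ) *ᵥ φ = 0 := by
    ext v
    simp [add_mulVec, hφ, degMatrix, mulVec_diagonal, hreg v]
  refine G.edgeIncMatrix.exists_mulVec_eq_zero_of_vecMul_eq_zero
    (card_le_card_edgeSet hreg hr) hφ0 ?_
  rw [← mulVec_transpose, G.edgeIncMatrix_transpose_mulVec_eq_zero hsignless]

end SimpleGraph

section NormalizedLaplacian

variable {V : Type*} [Fintype V] [DecidableEq V]

lemma adjM_eq_adjMatrix (G : SimpleGraph V) [DecidableRel G.Adj] : adjM G = G.adjMatrix ℝ := by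
  unfold adjM
  congr!

omit [DecidableEq V] in
lemma cdeg_eq_degree (G : SimpleGraph V) [DecidableRel G.Adj] (v : V) :
    cdeg G v = G.degree v := by
  unfold cdeg
  congr!

lemma adjM_mulVec_apply (G : SimpleGraph V) [DecidableRel G.Adj] (g : V → ℝ) (v : V) :
    (adjM G *ᵥ g) v = ∑ u, if G.Adj v u then g u else 0 := by
  simp [adjM_eq_adjMatrix, mulVec, dotProduct]

lemma adjM_mulVec_const (G : SimpleGraph V) (a : ℝ) (v : V) :
    (adjM G *ᵥ fun _ => a) v = cdeg G v * a := by
  classical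
  rw [adjM_eq_adjMatrix, cdeg_eq_degree]
  exact adjMatrix_mulVec_const_apply

variable {G : SimpleGraph V}

lemma normLap_mulVec_sqrt_mul (hG : ∀ v, 0 < cdeg G v) (g : V → ℝ) (v : V) :
    (normLap G *ᵥ fun u => √(cdeg G u : ℝ) * g u) v
      = √(cdeg G v : ℝ) * g v - (√(cdeg G v : ℝ))⁻¹ * (adjM G *ᵥ g) v := by
  have hcancel : (diagonal fun u => (√(cdeg G u : ℝ))⁻¹) *ᵥ (fun u => √(cdeg G u : ℝ) * g u)
      = g := by
    ext u
    have : √(cdeg G u : ℝ) ≠ 0 := by have := hG u; positivity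
    rw [mulVec_diagonal]
    field_simp
  simp only [normLap, sub_mulVec, one_mulVec, ← mulVec_mulVec, hcancel, mulVec_diagonal,
    Pi.sub_apply]

theorem isEigenvalue_normLap_iff (hG : ∀ v, 0 < cdeg G v) (x : ℝ) :
    IsEigenvalue (normLap G) x ↔
      ∃ g : V → ℝ, g ≠ 0 ∧ ∀ v, (adjM G *ᵥ g) v = (1 - x) * cdeg G v * g v := by
  have hsqrt : ∀ v, √(cdeg G v : ℝ) ≠ 0 := fun v => by have := hG v; positivity
  have hsq : ∀ v, √(cdeg G v : ℝ) ^ 2 = cdeg G v := fun v => Real.sq_sqrt (Nat.cast_nonneg _)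
  constructor
  · rintro ⟨f, hf0, hf⟩
    have hf_eq : f = fun u => √(cdeg G u : ℝ) * ((√(cdeg G u : ℝ))⁻¹ * f u) := by
      ext u
      field_simp [hsqrt u]
    refine ⟨fun u => (√(cdeg G u : ℝ))⁻¹ * f u, fun h0 => hf0 ?_, fun v => ?_⟩
    · ext u
      simpa [hsqrt u] using congrFun h0 u
    · have hv := congrFun hf v
      rw [hf_eq, normLap_mulVec_sqrt_mul hG] at hv
      simp only [Pi.smul_apply, smul_eq_mul] at hv
      field_simp [hsqrt v] at hv ⊢
      linear_combination (-(√(cdeg G v : ℝ))) * hv + (1 - x) * f v * hsq v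
  · rintro ⟨g, hg0, hg⟩
    refine ⟨fun u => √(cdeg G u : ℝ) * g u, fun h0 => hg0 ?_, ?_⟩
    · ext u
      simpa [hsqrt u] using congrFun h0 u
    · ext v
      rw [normLap_mulVec_sqrt_mul hG, hg, Pi.smul_apply, smul_eq_mul]
      field_simp [hsqrt v]
      linear_combination (1 - x) * g v * hsq v

lemma exists_adjMatrix_mulVec_eq_of_isEigenvalue_normLap [DecidableRel G.Adj] {r : ℕ}
    (hreg : G.IsRegularOfDegree r) (hr : 0 < r) {μ : ℝ} (hμ : IsEigenvalue (normLap G) μ) :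
    ∃ φ : V → ℝ, φ ≠ 0 ∧ G.adjMatrix ℝ *ᵥ φ = ((1 - μ) * r) • φ := by
  have hcdeg : ∀ v, cdeg G v = r := fun v => (cdeg_eq_degree G v).trans (hreg v)
  obtain ⟨φ, hφ0, hφ⟩ := (isEigenvalue_normLap_iff (fun v => hcdeg v ▸ hr) μ).1 hμ
  refine ⟨φ, hφ0, funext fun v => ?_⟩
  rw [← adjM_eq_adjMatrix, hφ, hcdeg, Pi.smul_apply, smul_eq_mul]

end NormalizedLaplacian

section SubdivisionVertexCorona

variable {n : ℕ} {G : SimpleGraph (Fin n)} [DecidableRel G.Adj] {t : Fin n → ℕ}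
  {H : ∀ i, SimpleGraph (Fin (t i))}

section MulVec

variable (f : Fin n → ℝ) (h : G.edgeSet → ℝ) (k : (Σ i, Fin (t i)) → ℝ)

lemma svc_adjM_mulVec_inl (v : Fin n) :
    (adjM (svc G t H) *ᵥ Sum.elim f (Sum.elim h k)) (.inl v)
      = (G.edgeIncMatrix *ᵥ h) v + ∑ w, k ⟨v, w⟩ := by
  classical
  rw [adjM_mulVec_apply]
  simp only [Fintype.sum_sum_type, Fintype.sum_sigma]
  simp [svc, edgeIncMatrix_apply, mulVec, dotProduct]

lemma svc_adjM_mulVec_edge (e : G.edgeSet) :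
    (adjM (svc G t H) *ᵥ Sum.elim f (Sum.elim h k)) (.inr (.inl e))
      = (G.edgeIncMatrixᵀ *ᵥ f) e := by
  classical
  rw [adjM_mulVec_apply]
  simp [Fintype.sum_sum_type, svc, edgeIncMatrix_apply, mulVec, dotProduct]

lemma svc_adjM_mulVec_corona (i : Fin n) (w : Fin (t i)) :
    (adjM (svc G t H) *ᵥ Sum.elim f (Sum.elim h k)) (.inr (.inr ⟨i, w⟩))
      = f i + (adjM (H i) *ᵥ fun w' => k ⟨i, w'⟩) w := by
  classical
  rw [adjM_mulVec_apply, adjM_mulVec_apply]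
  simp only [Fintype.sum_sum_type, Fintype.sum_sigma]
  simp only [svc, fromRel_adj, ne_eq, reduceCtorEq, not_false_eq_true, false_or, true_and,
    Sum.elim_inl, sum_ite_eq', mem_univ, ↓reduceIte, Sum.inr.injEq, or_self, and_false,
    sum_const_zero, Sigma.mk.injEq, not_and, Sum.elim_inr, zero_add, add_right_inj]
  rw [sum_eq_single i]
  · refine sum_congr rfl fun u _ => ?_
    by_cases h : (H i).Adj w u
    · simp [adj_comm, h, h.ne]
    · simp [adj_comm, h]
  · intro j _ hj
    simp [hj, Ne.symm hj]
  · simp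

end MulVec

lemma svc_cdeg_inl (v : Fin n) : (cdeg (svc G t H) (.inl v) : ℝ) = G.degree v + t v := by
  have := svc_adjM_mulVec_inl (G := G) (H := H) (fun _ => 1) (fun _ => 1) (fun _ => 1) v
  simpa [adjM_mulVec_const, edgeIncMatrix_mulVec_const] using this

lemma svc_cdeg_edge (e : G.edgeSet) : (cdeg (svc G t H) (.inr (.inl e)) : ℝ) = 2 := by
  have := svc_adjM_mulVec_edge (G := G) (H := H) (fun _ => 1) (fun _ => 1) (fun _ => 1) e
  simpa [adjM_mulVec_const, edgeIncMatrix_transpose_mulVec_const] using this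

lemma svc_cdeg_corona (i : Fin n) (w : Fin (t i)) :
    (cdeg (svc G t H) (.inr (.inr ⟨i, w⟩)) : ℝ) = cdeg (H i) w + 1 := by
  have := svc_adjM_mulVec_corona (G := G) (H := H) (fun _ => 1) (fun _ => 1) (fun _ => 1) i w
  simp only [Sum.elim_lam_const_lam_const, adjM_mulVec_const, mul_one] at this
  linarith

lemma svc_cdeg_pos (ht : ∀ i, 0 < t i) (z : Fin n ⊕ (G.edgeSet ⊕ Σ i, Fin (t i))) :
    0 < cdeg (svc G t H) z := by
  suffices 0 < (cdeg (svc G t H) z : ℝ) by exact_mod_cast this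
  rcases z with v | e | ⟨i, w⟩
  · rw [svc_cdeg_inl]
    have := ht v
    positivity
  · rw [svc_cdeg_edge]
    norm_num
  · rw [svc_cdeg_corona]
    positivity

theorem isEigenvalue_one_normLap_svc_of_edgeIncMatrix_mulVec_eq_zero (ht : ∀ i, 0 < t i)
    {h : G.edgeSet → ℝ} (h0 : h ≠ 0) (hN : G.edgeIncMatrix *ᵥ h = 0) :
    IsEigenvalue (normLap (svc G t H)) 1 := by
  rw [isEigenvalue_normLap_iff (svc_cdeg_pos ht)]
  refine ⟨Sum.elim 0 (Sum.elim h 0), fun hg => h0 ?_, ?_⟩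
  · ext e
    simpa using congrFun hg (.inr (.inl e))
  · rintro (v | e | ⟨i, w⟩)
    · simpa [svc_adjM_mulVec_inl] using congrFun hN v
    · simp [svc_adjM_mulVec_edge]
    · simp [svc_adjM_mulVec_corona, adjM_mulVec_const]

end SubdivisionVertexCorona

theorem isEigenvalue_normLap_svc_of_ansatz {n r t r1 : ℕ} {G : SimpleGraph (Fin n)}
    [DecidableRel G.Adj] {H : Fin n → SimpleGraph (Fin t)} (hreg : G.IsRegularOfDegree r)
    (hH : ∀ i w, cdeg (H i) w = r1) (ht : 0 < t) {μ : ℝ} {φ : Fin n → ℝ} (hφ0 : φ ≠ 0)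
    (hφ : G.adjMatrix ℝ *ᵥ φ = ((1 - μ) * r) • φ) {x a b c : ℝ} (hc : c ≠ 0)
    (hvert : r * (2 - μ) * b + t * c = (1 - x) * (r + t) * a)
    (hedge : a = (1 - x) * 2 * b)
    (hcorona : a + r1 * c = (1 - x) * (r1 + 1) * c) :
    IsEigenvalue (normLap (svc G (fun _ => t) H)) x := by
  rw [isEigenvalue_normLap_iff (svc_cdeg_pos fun _ => ht)]
  refine ⟨Sum.elim (a • φ) (Sum.elim (b • (G.edgeIncMatrixᵀ *ᵥ φ)) fun p => c * φ p.1),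
    ?_, ?_⟩
  · obtain ⟨v, hv⟩ := Function.ne_iff.1 hφ0
    exact Function.ne_iff.2 ⟨.inr (.inr ⟨v, ⟨0, ht⟩⟩), by simpa [hc] using hv⟩
  · rintro (v | e | ⟨i, w⟩)
    · have hNN : (G.edgeIncMatrix *ᵥ G.edgeIncMatrixᵀ *ᵥ φ) v = (2 - μ) * r * φ v := by
        rw [mulVec_mulVec, edgeIncMatrix_mul_transpose, add_mulVec, hφ]
        simp only [degMatrix, Pi.add_apply, mulVec_diagonal, hreg v, Pi.smul_apply, smul_eq_mul]
        ring
      rw [svc_adjM_mulVec_inl, svc_cdeg_inl, hreg v]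
      simp only [mulVec_smul, Pi.smul_apply, smul_eq_mul, hNN, Sum.elim_inl, sum_const,
        card_univ, Fintype.card_fin, nsmul_eq_mul]
      linear_combination φ v * hvert
    · rw [svc_adjM_mulVec_edge, svc_cdeg_edge]
      simp only [mulVec_smul, Pi.smul_apply, smul_eq_mul, Sum.elim_inr, Sum.elim_inl]
      linear_combination (G.edgeIncMatrixᵀ *ᵥ φ) e * hedge
    · rw [svc_adjM_mulVec_corona, svc_cdeg_corona, hH]
      simp only [Pi.smul_apply, smul_eq_mul, adjM_mulVec_const, hH, Sum.elim_inr]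
      linear_combination φ i * hcorona

theorem stmt4 {n r t r1 : ℕ} (hr : 2 ≤ r) (ht : 1 ≤ t)
    (G : SimpleGraph (Fin n)) [DecidableRel G.Adj]
    (hG : ∀ v, cdeg G v = r)
    (H : Fin n → SimpleGraph (Fin t)) (hH : ∀ i w, cdeg (H i) w = r1)
    (μ : ℝ) (hμ : IsEigenvalue (normLap G) μ) (x : ℝ)
    (hx : 2 * ((r : ℝ) + t + r * r1 + r1 * t) * x ^ 3
        - 2 * (2 * (r : ℝ) * r1 + 2 * r1 * t + 3 * r + 3 * t) * x ^ 2
        + (2 * (t : ℝ) * r1 + 4 * r + 4 * t + r * r1 * μ + r * μ) * x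
        - (r : ℝ) * μ = 0) :
    IsEigenvalue (normLap (svc G (fun _ => t) H)) x := by
  have hreg : G.IsRegularOfDegree r := fun v => (cdeg_eq_degree G v).symm.trans (hG v)
  have hr0 : (0 : ℝ) < r := Nat.cast_pos.2 (by omega)
  obtain ⟨φ, hφ0, hφ⟩ := exists_adjMatrix_mulVec_eq_of_isEigenvalue_normLap hreg (by omega) hμ
  by_cases hx1 : x = 1
  · subst hx1
    by_cases hμ2 : μ = 2
    · subst hμ2
      obtain ⟨h, h0, hN⟩ := exists_edgeIncMatrix_mulVec_eq_zero hreg hr hφ0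
        (by rw [hφ]; norm_num)
      exact isEigenvalue_one_normLap_svc_of_edgeIncMatrix_mulVec_eq_zero (fun _ => ht) h0 hN
    · have hr1 : (r1 : ℝ) = 0 := by
        have : (r : ℝ) * (μ - 2) * r1 = 0 := by linear_combination hx
        simpa [hr0.ne', sub_ne_zero.2 hμ2] using this
      exact isEigenvalue_normLap_svc_of_ansatz hreg hH ht hφ0 hφ (a := 0) (b := t)
        (mul_ne_zero hr0.ne' (sub_ne_zero.2 hμ2)) (by ring) (by ring) (by rw [hr1]; ring)
  -- `a` and `b` solve the edge and corona equations for `c = 2 (1 - x)`;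
  -- the vertex equation is then the cubic.
  · exact isEigenvalue_normLap_svc_of_ansatz hreg hH ht hφ0 hφ
      (a := 2 * (1 - x) * ((r1 + 1) * (1 - x) - r1)) (b := (r1 + 1) * (1 - x) - r1)
      (mul_ne_zero two_ne_zero (sub_ne_zero.2 (Ne.symm hx1))) (by linear_combination hx)
      (by ring) (by ring)
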